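/- For any n ≥ 2 and any τ_{i,0}, τ_{i,1} with 1 ≥ τ_{i,0} ≥ τ_{i,1} ≥ 0, the maximal n-local chain score satisfies S*_{n-Chain} = ((τ_{1,0}² + τ_{1,1}²)(τ_{n,0}² + τ_{n,1}²))^{1/4} ∏_{i=2}^{n−1}√(τ_{i,0}) ≤ √2, with equality iff τ_{1,0} = τ_{1,1} = τ_{n,0} = τ_{n,1} = 1 and τ_{i,0} = 1 for all 2 ≤ i ≤ n−1. -/

import Mathlib

/-! Each endpoint factor `τ₀² + τ₁²` is at most `2` and each middle factor `√τ₀` at most `1`,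
so the score is at most `(2 · 2) ^ (1/4) = √2`. All factors being nonnegative, equality forces
every factor to its maximum, and a sum of two squares of numbers in `[0, 1]` equals `2` only at
`(1, 1)`. -/

open Finset

theorem mul_eq_mul_iff_eq_and_eq_of_nonneg {α : Type*} [MonoidWithZero α] [PartialOrder α]
    [PosMulStrictMono α] [MulPosStrictMono α] {a b c d : α}
    (hab : a ≤ b) (hcd : c ≤ d) (hb : 0 < b) (hd : 0 < d) (hc : 0 ≤ c) :
    a * c = b * d ↔ a = b ∧ c = d := by
  rcases hc.eq_or_lt with rfl | hc
  · simp only [mul_zero]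
    exact iff_of_false (mul_pos hb hd).ne fun h => hd.ne h.2
  · exact mul_eq_mul_iff_eq_and_eq_of_pos' hab hcd hb hc

theorem Finset.prod_eq_one_iff_of_nonneg_of_le_one {ι R : Type*} [CommMonoidWithZero R]
    [PartialOrder R] [ZeroLEOneClass R] [PosMulMono R] {f : ι → R} {s : Finset ι}
    (h0 : ∀ i ∈ s, 0 ≤ f i) (h1 : ∀ i ∈ s, f i ≤ 1) :
    ∏ i ∈ s, f i = 1 ↔ ∀ i ∈ s, f i = 1 := by
  classical
  refine ⟨fun hprod j hj => (h1 j hj).antisymm ?_, prod_eq_one⟩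
  calc (1 : R) = f j * ∏ i ∈ s.erase j, f i := by rw [mul_prod_erase s f hj, hprod]
    _ ≤ f j * 1 := mul_le_mul_of_nonneg_left
        (prod_le_one (fun i hi => h0 i (mem_of_mem_erase hi))
          (fun i hi => h1 i (mem_of_mem_erase hi))) (h0 j hj)
    _ = f j := mul_one _

theorem Real.four_rpow_one_div_four : (4 : ℝ) ^ ((1 : ℝ) / 4) = √2 := by
  rw [show (4 : ℝ) = 2 ^ (2 : ℝ) by norm_num, ← Real.rpow_mul zero_le_two, Real.sqrt_eq_rpow]
  norm_num

section UnitSquare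

variable {a b : ℝ}

theorem sq_add_sq_le_two (ha0 : 0 ≤ a) (ha1 : a ≤ 1) (hb0 : 0 ≤ b) (hb1 : b ≤ 1) :
    a ^ 2 + b ^ 2 ≤ 2 := by
  nlinarith [pow_le_one₀ ha0 ha1 (n := 2), pow_le_one₀ hb0 hb1 (n := 2)]

theorem sq_add_sq_eq_two_iff (ha0 : 0 ≤ a) (ha1 : a ≤ 1) (hb0 : 0 ≤ b) (hb1 : b ≤ 1) :
    a ^ 2 + b ^ 2 = 2 ↔ a = 1 ∧ b = 1 := by
  rw [show (2 : ℝ) = 1 + 1 by norm_num,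
    add_eq_add_iff_eq_and_eq (pow_le_one₀ ha0 ha1) (pow_le_one₀ hb0 hb1),
    pow_eq_one_iff_of_nonneg ha0 two_ne_zero, pow_eq_one_iff_of_nonneg hb0 two_ne_zero]

end UnitSquare

section QuarterRootBound

variable {A B P : ℝ}

theorem rpow_one_div_four_le_four_rpow (hA0 : 0 ≤ A) (hA2 : A ≤ 2) (hB0 : 0 ≤ B) (hB2 : B ≤ 2) :
    (A * B) ^ ((1 : ℝ) / 4) ≤ (4 : ℝ) ^ ((1 : ℝ) / 4) := by
  gcongr
  nlinarith

theorem rpow_one_div_four_mul_le_sqrt_two (hA0 : 0 ≤ A) (hA2 : A ≤ 2) (hB0 : 0 ≤ B)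
    (hB2 : B ≤ 2) (hP0 : 0 ≤ P) (hP1 : P ≤ 1) :
    (A * B) ^ ((1 : ℝ) / 4) * P ≤ √2 := by
  rw [← Real.four_rpow_one_div_four, ← mul_one ((4 : ℝ) ^ _)]
  exact mul_le_mul (rpow_one_div_four_le_four_rpow hA0 hA2 hB0 hB2) hP1 hP0 (by positivity)

theorem rpow_one_div_four_mul_eq_sqrt_two_iff (hA0 : 0 ≤ A) (hA2 : A ≤ 2) (hB0 : 0 ≤ B)
    (hB2 : B ≤ 2) (hP0 : 0 ≤ P) (hP1 : P ≤ 1) :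
    (A * B) ^ ((1 : ℝ) / 4) * P = √2 ↔ A = 2 ∧ B = 2 ∧ P = 1 := by
  rw [← Real.four_rpow_one_div_four, ← mul_one ((4 : ℝ) ^ _),
    mul_eq_mul_iff_eq_and_eq_of_nonneg (rpow_one_div_four_le_four_rpow hA0 hA2 hB0 hB2) hP1
      (by positivity) one_pos hP0,
    Real.rpow_left_inj (by positivity) (by norm_num) (by norm_num),
    show (4 : ℝ) = 2 * 2 by norm_num,
    mul_eq_mul_iff_eq_and_eq_of_nonneg hA2 hB2 two_pos two_pos hB0, and_assoc]

end QuarterRootBound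

theorem chain_score_tsirelson_bound (n : ℕ) (hn : 2 ≤ n)
    (τ : Fin n → Fin 2 → ℝ)
    (h1 : ∀ i, τ i 0 ≤ 1) (h2 : ∀ i, τ i 1 ≤ τ i 0) (h3 : ∀ i, 0 ≤ τ i 1) :
    (((τ ⟨0, by omega⟩ 0) ^ 2 + (τ ⟨0, by omega⟩ 1) ^ 2) *
          ((τ ⟨n - 1, by omega⟩ 0) ^ 2 + (τ ⟨n - 1, by omega⟩ 1) ^ 2)) ^ ((1 : ℝ) / 4) *
        (∏ i ∈ Finset.univ.filter (fun i : Fin n => 1 ≤ (i : ℕ) ∧ (i : ℕ) < n - 1),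
          Real.sqrt (τ i 0)) ≤ Real.sqrt 2 ∧
    ((((τ ⟨0, by omega⟩ 0) ^ 2 + (τ ⟨0, by omega⟩ 1) ^ 2) *
          ((τ ⟨n - 1, by omega⟩ 0) ^ 2 + (τ ⟨n - 1, by omega⟩ 1) ^ 2)) ^ ((1 : ℝ) / 4) *
        (∏ i ∈ Finset.univ.filter (fun i : Fin n => 1 ≤ (i : ℕ) ∧ (i : ℕ) < n - 1),
          Real.sqrt (τ i 0)) = Real.sqrt 2 ↔
      (τ ⟨0, by omega⟩ 0 = 1 ∧ τ ⟨0, by omega⟩ 1 = 1 ∧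
        τ ⟨n - 1, by omega⟩ 0 = 1 ∧ τ ⟨n - 1, by omega⟩ 1 = 1 ∧
        ∀ i : Fin n, 1 ≤ (i : ℕ) → (i : ℕ) < n - 1 → τ i 0 = 1)) := by
  have h0 i : 0 ≤ τ i 0 := (h3 i).trans (h2 i)
  have hend0 i : 0 ≤ τ i 0 ^ 2 + τ i 1 ^ 2 := by positivity
  have hend2 i : τ i 0 ^ 2 + τ i 1 ^ 2 ≤ 2 :=
    sq_add_sq_le_two (h0 i) (h1 i) (h3 i) ((h2 i).trans (h1 i))
  set s := univ.filter fun i : Fin n => 1 ≤ (i : ℕ) ∧ (i : ℕ) < n - 1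
  have hsqrt0 : ∀ i ∈ s, 0 ≤ √(τ i 0) := fun _ _ => Real.sqrt_nonneg _
  have hsqrt1 : ∀ i ∈ s, √(τ i 0) ≤ 1 := fun i _ => Real.sqrt_le_one.mpr (h1 i)
  refine ⟨rpow_one_div_four_mul_le_sqrt_two (hend0 _) (hend2 _) (hend0 _) (hend2 _)
    (prod_nonneg hsqrt0) (prod_le_one hsqrt0 hsqrt1), ?_⟩
  rw [rpow_one_div_four_mul_eq_sqrt_two_iff (hend0 _) (hend2 _) (hend0 _) (hend2 _)
      (prod_nonneg hsqrt0) (prod_le_one hsqrt0 hsqrt1),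
    sq_add_sq_eq_two_iff (h0 _) (h1 _) (h3 _) ((h2 _).trans (h1 _)),
    sq_add_sq_eq_two_iff (h0 _) (h1 _) (h3 _) ((h2 _).trans (h1 _)),
    prod_eq_one_iff_of_nonneg_of_le_one hsqrt0 hsqrt1]
  simp only [s, mem_filter, mem_univ, true_and, Real.sqrt_eq_one, and_imp, and_assoc]
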